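/- Vertex-restricted 2-approximate simplification exists: let (X,ρ) be a metric space, let p ∈ [1,∞), let ℓ ≥ 2 be an integer, let π = (x₁,…,x_m) ∈ X^m be a point sequence, and let P = {x₁,…,x_m} be its set of vertices. Then the minimum of dtw_p(π,σ) over all point sequences σ of complexity at most ℓ whose vertices all lie in P is at most 2 times the minimum of dtw_p(π,π') over all point sequences π' ∈ X^{≤ℓ}; that is, some point sequence over the vertices of π is a (2,ℓ)-simplification of π under dtw_p. -/

import Mathlib

/-!
Snap every vertex `y` of a competitor `π'` to a nearest vertex `z` of `π`. For each vertex `x`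
of `π`, `ρ(x, z) ≤ ρ(x, y) + ρ(y, z) ≤ 2 ρ(x, y)`, so along every warping the cost grows by at
most the factor `2 ^ p`, and `dtw_p(π, snapped π') ≤ 2 dtw_p(π, π')`. There are only finitely
many sequences of complexity at most `ℓ` over the vertices of `π`; one minimizing `dtw_p(π, ·)`
among them is therefore within the factor 2 of every `π'`.
-/

open scoped BigOperators

/-- An `(m₁, m₂)`-warping (with 0-based indices): a sequence of index pairs starting at
`(0,0)`, ending at `(m₁-1, m₂-1)`, whose consecutive increments lie in
`{(0,1), (1,0), (1,1)}`. -/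
def IsWarping (m₁ m₂ : ℕ) (W : List (ℕ × ℕ)) : Prop :=
  W ≠ [] ∧ W.head? = some (0, 0) ∧ W.getLast? = some (m₁ - 1, m₂ - 1) ∧
    ∀ k, k + 1 < W.length →
      W.getD (k + 1) (0, 0) = ((W.getD k (0, 0)).1, (W.getD k (0, 0)).2 + 1) ∨
      W.getD (k + 1) (0, 0) = ((W.getD k (0, 0)).1 + 1, (W.getD k (0, 0)).2) ∨
      W.getD (k + 1) (0, 0) = ((W.getD k (0, 0)).1 + 1, (W.getD k (0, 0)).2 + 1)

/-- The cost `Σ_{(i,j) ∈ W} ρ(σ_i, τ_j)^p` of a warping `W`. -/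
noncomputable def warpCost {X : Type*} [MetricSpace X] [Inhabited X]
    (p : ℝ) (σ τ : List X) (W : List (ℕ × ℕ)) : ℝ :=
  (W.map fun ij => dist (σ.getD ij.1 default) (τ.getD ij.2 default) ^ p).sum

/-- The `p`-dynamic time warping distance between two point sequences. -/
noncomputable def dtw {X : Type*} [MetricSpace X] [Inhabited X] (p : ℝ) (σ τ : List X) : ℝ :=
  sInf { c : ℝ | ∃ W, IsWarping σ.length τ.length W ∧ c = warpCost p σ τ W ^ (1 / p) }

/-- `cost_p^q(T, c) = Σ_{τ ∈ T} dtw_p(c, τ)^q`. -/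
noncomputable def dtwCost {X : Type*} [MetricSpace X] [Inhabited X]
    (p q : ℝ) (T : Finset (List X)) (c : List X) : ℝ :=
  ∑ τ ∈ T, dtw p c τ ^ q

/-- `σ` is a point sequence of complexity at most `ℓ`, i.e. `σ ∈ X^{≤ℓ}`. -/
def SeqLE {X : Type*} (ℓ : ℕ) (σ : List X) : Prop := 2 ≤ σ.length ∧ σ.length ≤ ℓ

lemma IsWarping.isChain_le {m₁ m₂ : ℕ} {W : List (ℕ × ℕ)} (hW : IsWarping m₁ m₂ W) :
    W.IsChain (· ≤ ·) := by
  refine List.isChain_iff_getElem.2 fun k hk => ?_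
  have hstep := hW.2.2.2 k hk
  rw [List.getD_eq_getElem _ _ hk, List.getD_eq_getElem _ _ (by omega)] at hstep
  rcases hstep with h | h | h <;> rw [h] <;> simp [Prod.le_def]

lemma IsWarping.le_of_mem {m₁ m₂ : ℕ} {W : List (ℕ × ℕ)} (hW : IsWarping m₁ m₂ W)
    {q : ℕ × ℕ} (hq : q ∈ W) : q ≤ (m₁ - 1, m₂ - 1) := by
  have hlast := List.getLast?_eq_some_getLast (List.ne_nil_of_mem hq)
  rw [hW.2.2.1, Option.some_inj] at hlast
  exact hlast ▸ hW.isChain_le.pairwise.rel_getLast hq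

lemma IsWarping.lt_of_mem {m₁ m₂ : ℕ} {W : List (ℕ × ℕ)} (hW : IsWarping m₁ m₂ W)
    (h₁ : 0 < m₁) (h₂ : 0 < m₂) {q : ℕ × ℕ} (hq : q ∈ W) : q.1 < m₁ ∧ q.2 < m₂ := by
  obtain ⟨hq₁, hq₂⟩ := Prod.le_def.1 (hW.le_of_mem hq)
  exact ⟨by omega, by omega⟩

section
variable {X : Type*} [MetricSpace X] [Inhabited X]

lemma warpCost_nonneg (p : ℝ) (σ τ : List X) (W : List (ℕ × ℕ)) : 0 ≤ warpCost p σ τ W :=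
  List.sum_nonneg <| by
    simp only [List.mem_map]
    rintro _ ⟨q, -, rfl⟩
    exact Real.rpow_nonneg dist_nonneg p

lemma warpCost_map_le {p c : ℝ} (hp : 0 ≤ p) (hc : 0 ≤ c) {σ τ : List X} {f : X → X}
    (hσ : σ ≠ []) (hτ : τ ≠ []) (hf : ∀ x ∈ σ, ∀ y ∈ τ, dist x (f y) ≤ c * dist x y)
    {W : List (ℕ × ℕ)} (hW : IsWarping σ.length τ.length W) :
    warpCost p σ (τ.map f) W ≤ c ^ p * warpCost p σ τ W := by
  rw [warpCost, warpCost, ← List.sum_map_mul_left]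
  refine List.sum_le_sum fun q hq => ?_
  obtain ⟨hi, hj⟩ := hW.lt_of_mem (List.length_pos_iff.2 hσ) (List.length_pos_iff.2 hτ) hq
  simp only [List.getD_eq_getElem _ _ hi, List.getD_eq_getElem _ _ hj,
    List.getD_eq_getElem _ _ (τ.length_map f ▸ hj), List.getElem_map]
  calc dist σ[q.1] (f τ[q.2]) ^ p ≤ (c * dist σ[q.1] τ[q.2]) ^ p :=
        Real.rpow_le_rpow dist_nonneg (hf _ (List.getElem_mem _) _ (List.getElem_mem _)) hp
    _ = c ^ p * dist σ[q.1] τ[q.2] ^ p := Real.mul_rpow hc dist_nonneg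

lemma dtw_le_mul_of_warpCost_le {p c : ℝ} (hp : 0 < p) (hc : 0 ≤ c) {σ τ τ' : List X}
    (hlen : τ'.length = τ.length)
    (h : ∀ W, IsWarping σ.length τ.length W → warpCost p σ τ' W ≤ c ^ p * warpCost p σ τ W) :
    dtw p σ τ' ≤ c * dtw p σ τ := by
  rw [dtw, dtw, hlen]
  set A := {a | ∃ W, IsWarping σ.length τ.length W ∧ a = warpCost p σ τ W ^ (1 / p)}
  set B := {b | ∃ W, IsWarping σ.length τ.length W ∧ b = warpCost p σ τ' W ^ (1 / p)}
  -- Without any warping both sides are the junk value `sInf ∅ = 0`.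
  rcases Set.eq_empty_or_nonempty A with hA | hA
  · have hB : B = ∅ := Set.eq_empty_of_forall_notMem fun _ ⟨W, hW, _⟩ =>
      Set.eq_empty_iff_forall_notMem.1 hA _ ⟨W, hW, rfl⟩
    simp [hA, hB]
  rw [← smul_eq_mul, ← Real.sInf_smul_of_nonneg hc]
  refine le_csInf hA.smul_set ?_
  rintro _ ⟨_, ⟨W, hW, rfl⟩, rfl⟩
  have hBbdd : BddBelow B :=
    ⟨0, fun _ ⟨W, _, hb⟩ => hb ▸ Real.rpow_nonneg (warpCost_nonneg _ _ _ _) _⟩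
  calc sInf B ≤ warpCost p σ τ' W ^ (1 / p) := csInf_le hBbdd ⟨W, hW, rfl⟩
    _ ≤ (c ^ p * warpCost p σ τ W) ^ (1 / p) :=
        Real.rpow_le_rpow (warpCost_nonneg _ _ _ _) (h W hW) (by positivity)
    _ = c • warpCost p σ τ W ^ (1 / p) := by
        rw [Real.mul_rpow (by positivity) (warpCost_nonneg _ _ _ _), one_div,
          Real.rpow_rpow_inv hc hp.ne', smul_eq_mul]

lemma dtw_map_le_of_dist_le {p c : ℝ} (hp : 0 < p) (hc : 0 ≤ c) {σ τ : List X} {f : X → X}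
    (hσ : σ ≠ []) (hτ : τ ≠ []) (hf : ∀ x ∈ σ, ∀ y ∈ τ, dist x (f y) ≤ c * dist x y) :
    dtw p σ (τ.map f) ≤ c * dtw p σ τ :=
  dtw_le_mul_of_warpCost_le hp hc (τ.length_map f) fun _ hW =>
    warpCost_map_le hp.le hc hσ hτ hf hW

end

lemma dist_le_two_mul_of_dist_le {X : Type*} [PseudoMetricSpace X] {x y z : X}
    (h : dist y z ≤ dist y x) : dist x z ≤ 2 * dist x y :=
  calc dist x z ≤ dist x y + dist y z := dist_triangle x y z
    _ ≤ dist x y + dist y x := by gcongr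
    _ = 2 * dist x y := by rw [dist_comm y x, two_mul]

lemma List.exists_forall_dist_le {X : Type*} [PseudoMetricSpace X] {l : List X} (hl : l ≠ [])
    (y : X) : ∃ z ∈ l, ∀ x ∈ l, dist y z ≤ dist y x :=
  Set.exists_min_image {x | x ∈ l} (dist y) l.finite_toSet ⟨l.head hl, l.head_mem hl⟩

lemma exists_map_dtw_le_two_mul {X : Type*} [MetricSpace X] [Inhabited X] {p : ℝ} (hp : 0 < p)
    {π : List X} (hπ : π ≠ []) :
    ∃ f : X → X, (∀ y, f y ∈ π) ∧ ∀ τ ≠ [], dtw p π (τ.map f) ≤ 2 * dtw p π τ := by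
  choose f hfπ hf using List.exists_forall_dist_le hπ
  exact ⟨f, hfπ, fun τ hτ => dtw_map_le_of_dist_le hp zero_le_two hπ hτ
    fun x hx y _ => dist_le_two_mul_of_dist_le (hf y x hx)⟩

lemma Set.Finite.setOf_length_le_forall_mem {α : Type*} {s : Set α} (hs : s.Finite) (n : ℕ) :
    {l : List α | l.length ≤ n ∧ ∀ x ∈ l, x ∈ s}.Finite := by
  have := hs.to_subtype
  refine ((List.finite_length_le s n).image (List.map (↑))).subset ?_
  rintro l ⟨hn, hl⟩
  lift l to List s using hl
  exact ⟨l, by simpa using hn, rfl⟩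

/-- **Vertex-restricted 2-approximate simplification exists**
(Lemma `lemma:simplificationcorrectness2`): for every point sequence `π ∈ X^m` there is a
point sequence `σ` of complexity at most `ℓ`, all of whose vertices are vertices of `π`,
with `dtw_p(π,σ) ≤ 2 · dtw_p(π,π')` for every `π' ∈ X^{≤ℓ}`; i.e. some point sequence over
the vertices of `π` is a `(2,ℓ)`-simplification of `π` under `dtw_p`. -/
theorem vertex_restricted_two_approx_simplification {X : Type*} [MetricSpace X] [Inhabited X]
    (p : ℝ) (hp : 1 ≤ p) (ℓ : ℕ) (hℓ : 2 ≤ ℓ)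
    (π : List X) (hπ : 2 ≤ π.length) :
    ∃ σ : List X, SeqLE ℓ σ ∧ (∀ v ∈ σ, v ∈ π) ∧
      ∀ π' : List X, SeqLE ℓ π' → dtw p π σ ≤ 2 * dtw p π π' := by
  have hπne : π ≠ [] := List.ne_nil_of_length_pos (by omega)
  obtain ⟨f, hfπ, hf⟩ := exists_map_dtw_le_two_mul (by linarith) hπne
  set S := {σ : List X | SeqLE ℓ σ ∧ ∀ v ∈ σ, v ∈ π}
  have hS : S.Finite := (π.finite_toSet.setOf_length_le_forall_mem ℓ).subset
    fun σ hσ => ⟨hσ.1.2, hσ.2⟩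
  have hSne : S.Nonempty := ⟨List.replicate 2 (π.head hπne), ⟨by simp, by simpa using hℓ⟩,
    fun _ hv => List.eq_of_mem_replicate hv ▸ π.head_mem hπne⟩
  obtain ⟨σ, ⟨hσ, hσπ⟩, hσmin⟩ := S.exists_min_image (dtw p π) hS hSne
  refine ⟨σ, hσ, hσπ, fun π' hπ' => ?_⟩
  have hπ'S : π'.map f ∈ S := ⟨by simpa [SeqLE] using hπ',
    fun _ hv => (List.mem_map.1 hv).elim fun y hy => hy.2 ▸ hfπ y⟩
  exact (hσmin _ hπ'S).trans (hf π' (List.ne_nil_of_length_pos (by have := hπ'.1; omega)))
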